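/- arXiv:2508.03145 — 4 statements merged into one kernel-verified Lean document; each statement's English description precedes it below -/
import Mathlib

section
/- Let T₁', T₁, T₂', T₂ be categories. Let u : T₁' ⥤ T₂' and v : T₁ ⥤ T₂ be functors admitting right adjoints u_* and v_* respectively, let f_* : T₁' ⥤ T₁ and g_* : T₂' ⥤ T₂ be conservative functors admitting left adjoints f^* and g^* respectively, and let α : g_* ∘ u ≅ v ∘ f_* be a natural isomorphism whose associated mate (Beck–Chevalley transformation) g^* ∘ v ⟶ u ∘ f^* is a natural isomorphism. If v is an equivalence of categories, then u is an equivalence of categories. -/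
/-!
The mate `γ : u_* ⋙ f_* ⟶ g_* ⋙ v_*` of `α⁻¹` along `u ⊣ u_*`, `v ⊣ v_*` is conjugate to its
mate along `f^* ⊣ f_*`, `g^* ⊣ g_*`, the Beck–Chevalley transformation, so `γ` is invertible.
The unit and counit identities of `γ` exhibit `f_*(η_u)` and `g_*(ε_u)` as composites of
components of `α`, `γ` and of the adjoint equivalence `v ⊣ v_*`; since `f_*` and `g_*` are
conservative, `u ⊣ u_*` is itself an adjoint equivalence.
-/

open CategoryTheory

namespace CategoryTheory

variable {A B C D : Type*} [Category A] [Category B] [Category C] [Category D]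
  {u : A ⥤ C} {us : C ⥤ A} {v : B ⥤ D} {vs : D ⥤ B} {fs : A ⥤ B} {gs : C ⥤ D}
  (adj_u : u ⊣ us) (adj_v : v ⊣ vs) (τ : TwoSquare fs u v gs)

theorem isIso_mateEquiv_iff_isIso_mateEquiv_symm {fstar : B ⥤ A} {gstar : D ⥤ C}
    (adj_f : fstar ⊣ fs) (adj_g : gstar ⊣ gs) :
    IsIso (mateEquiv adj_u adj_v τ).natTrans ↔
      IsIso ((mateEquiv adj_f adj_g).symm τ).natTrans := by
  have h := iterated_mateEquiv_conjugateEquiv adj_f adj_g adj_v adj_u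
    ((mateEquiv adj_f adj_g).symm τ)
  rw [Equiv.apply_symm_apply] at h
  rw [h]
  exact ⟨fun _ => conjugateEquiv_of_iso (adj_f.comp adj_u) (adj_v.comp adj_g) _,
    fun _ => conjugateEquiv_iso (adj_f.comp adj_u) (adj_v.comp adj_g) _⟩

theorem isIso_unit_app_of_isIso_mateEquiv [IsIso τ.natTrans]
    [IsIso (mateEquiv adj_u adj_v τ).natTrans] [IsIso adj_v.unit] [fs.ReflectsIsomorphisms]
    (X : A) : IsIso (adj_u.unit.app X) := by
  have :
      IsIso (fs.map (adj_u.unit.app X) ≫ (mateEquiv adj_u adj_v τ).natTrans.app (u.obj X)) := by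
    rw [unit_mateEquiv]
    exact IsIso.comp_isIso' inferInstance (vs.map_isIso (τ.natTrans.app X))
  have := IsIso.of_isIso_comp_right (fs.map (adj_u.unit.app X))
    ((mateEquiv adj_u adj_v τ).natTrans.app (u.obj X))
  exact isIso_of_reflects_iso _ fs

theorem isIso_counit_app_of_isIso_mateEquiv [IsIso τ.natTrans]
    [IsIso (mateEquiv adj_u adj_v τ).natTrans] [IsIso adj_v.counit] [gs.ReflectsIsomorphisms]
    (Y : C) : IsIso (adj_u.counit.app Y) := by
  have : IsIso (τ.natTrans.app (us.obj Y) ≫ gs.map (adj_u.counit.app Y)) := by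
    rw [← mateEquiv_counit adj_u adj_v τ Y]
    exact IsIso.comp_isIso' (v.map_isIso ((mateEquiv adj_u adj_v τ).natTrans.app Y)) inferInstance
  have := IsIso.of_isIso_comp_left (τ.natTrans.app (us.obj Y)) (gs.map (adj_u.counit.app Y))
  exact isIso_of_reflects_iso _ gs

end CategoryTheory

theorem equivalence_of_rightAdjointable_square
    {T₁' T₁ T₂' T₂ : Type*}
    [Category T₁'] [Category T₁] [Category T₂'] [Category T₂]
    (u : T₁' ⥤ T₂') (us : T₂' ⥤ T₁') (adj_u : u ⊣ us)
    (v : T₁ ⥤ T₂) (vs : T₂ ⥤ T₁) (adj_v : v ⊣ vs)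
    (fs : T₁' ⥤ T₁) (fstar : T₁ ⥤ T₁') (adj_f : fstar ⊣ fs)
    (gs : T₂' ⥤ T₂) (gstar : T₂ ⥤ T₂') (adj_g : gstar ⊣ gs)
    [fs.ReflectsIsomorphisms] [gs.ReflectsIsomorphisms]
    (α : u ⋙ gs ≅ fs ⋙ v)
    (hmate : IsIso ((mateEquiv adj_f adj_g).symm α.inv))
    (hv : v.IsEquivalence) :
    u.IsEquivalence := by
  have : IsIso (mateEquiv adj_u adj_v α.inv).natTrans :=
    (isIso_mateEquiv_iff_isIso_mateEquiv_symm adj_u adj_v α.inv adj_f adj_g).2 hmate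
  have := isIso_unit_app_of_isIso_mateEquiv adj_u adj_v α.inv
  have := isIso_counit_app_of_isIso_mateEquiv adj_u adj_v α.inv
  exact adj_u.toEquivalence.isEquivalence_functor
end

section
/- Let I be a small category and let R : I^op ⥤ CommRing be a presheaf of commutative rings on I. For each object i of I, define the presheaf of R-modules F(i) whose value at an object j is the direct sum ⨁_{u ∈ Hom_I(j,i)} R(j) of copies of R(j) indexed by the morphisms j → i, with restriction maps induced by composition in I. Then for every presheaf of R-modules M there is an isomorphism of abelian groups Hom(F(i), M) ≅ M(i), natural in M. -/
open CategoryTheory Opposite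

theorem free_presheafOfModules_hom_addEquiv
    {I : Type u} [SmallCategory I] (R : Iᵒᵖ ⥤ CommRingCat.{u}) (i : I) :
    (∀ j : I,
      ((PresheafOfModules.free (R ⋙ forget₂ CommRingCat RingCat)).obj
          (yoneda.obj i)).obj (op j) =
        (ModuleCat.free ((R ⋙ forget₂ CommRingCat RingCat).obj (op j))).obj (j ⟶ i)) ∧
    ∃ e : ∀ (M : PresheafOfModules.{u} (R ⋙ forget₂ CommRingCat RingCat)),
        ((PresheafOfModules.free (R ⋙ forget₂ CommRingCat RingCat)).obj
            (yoneda.obj i) ⟶ M) ≃+ M.obj (op i),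
      ∀ (M N : PresheafOfModules.{u} (R ⋙ forget₂ CommRingCat RingCat))
        (φ : M ⟶ N)
        (f : (PresheafOfModules.free (R ⋙ forget₂ CommRingCat RingCat)).obj
          (yoneda.obj i) ⟶ M),
        e N (f ≫ φ) = φ.app (op i) (e M f) := by
  refine ⟨fun j ↦ rfl, ⟨fun M ↦
    { toEquiv := PresheafOfModules.freeYonedaEquiv
      map_add' := fun f g ↦ ?_ }, fun M N φ f ↦ rfl⟩⟩
  rfl
end

section
/- Let I be a small category and let R : I^op ⥤ CommRing be a presheaf of commutative rings on I. Then the abelian category of presheaves of R-modules has enough projectives: each free presheaf F(i) (characterized by Hom(F(i), M) ≅ M(i)) is a projective object, and every presheaf of R-modules admits an epimorphism from a direct sum of objects of the form F(i). -/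
open CategoryTheory Limits Opposite

namespace PresheafOfModules

universe w

lemma freeYoneda_projective {C : Type w} [SmallCategory C] (R : Cᵒᵖ ⥤ RingCat.{w}) (X : C) :
    Projective ((free R).obj (yoneda.obj X)) where
  factors {E M} g f _ := by
    obtain ⟨e, he⟩ := surjective_of_epi f (op X) (freeYonedaEquiv g)
    exact ⟨freeYonedaEquiv.symm e, freeYonedaEquiv.injective (by
      rw [freeYonedaEquiv_comp, Equiv.apply_symm_apply, he])⟩

end PresheafOfModules

theorem presheafOfModules_enoughProjectives
    {I : Type u} [SmallCategory I] (R : Iᵒᵖ ⥤ CommRingCat.{u}) :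
    EnoughProjectives (PresheafOfModules.{u} (R ⋙ forget₂ CommRingCat RingCat)) ∧
    (∀ i : I,
      Projective ((PresheafOfModules.free (R ⋙ forget₂ CommRingCat RingCat)).obj
        (yoneda.obj i))) ∧
    ∀ M : PresheafOfModules.{u} (R ⋙ forget₂ CommRingCat RingCat),
      ∃ (ι : Type u) (c : ι → I)
        (p : (∐ fun k : ι =>
          (PresheafOfModules.free (R ⋙ forget₂ CommRingCat RingCat)).obj
            (yoneda.obj (c k))) ⟶ M), Epi p := by
  set R' := R ⋙ forget₂ CommRingCat RingCat
  have hproj : ∀ i : I, Projective ((PresheafOfModules.free R').obj (yoneda.obj i)) :=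
    PresheafOfModules.freeYoneda_projective R'
  refine ⟨⟨fun M => ?_⟩, hproj, fun M => ?_⟩
  · exact ⟨{
      p := M.freeYonedaCoproduct
      f := M.fromFreeYonedaCoproduct
      projective := by
        have : ∀ m : M.Elements, Projective m.freeYoneda := fun m => hproj _
        infer_instance }⟩
  · exact ⟨M.Elements, fun m => m.1.unop, M.fromFreeYonedaCoproduct, inferInstance⟩
end

section
/- Let R be a ring, let D be a category admitting all small colimits, let F, G : ModuleCat R ⥤ D be functors preserving all small colimits, and let μ : F ⟶ G be a natural transformation such that the component μ_R at the free module R of rank one is an isomorphism. Then μ is a natural isomorphism, i.e., μ_M is an isomorphism for every R-module M. -/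
/-!
The modules `M` at which `μ_M` is invertible are closed under isomorphisms and under the colimits
that `F` and `G` preserve. Direct sums of copies of `R` are such colimits, so `μ` is invertible on
free modules, and a presentation `R^(τ) → R^(σ) → M → 0` exhibits every module as a cokernel of
free modules.
-/

open CategoryTheory Limits

namespace CategoryTheory.NatTrans

variable {C D J : Type*} [Category* C] [Category* D] [Category* J] {F G : C ⥤ D} (μ : F ⟶ G)

lemma isIso_app_of_isColimit {K : J ⥤ C} {c : Cocone K} (hc : IsColimit c)
    [PreservesColimit K F] [PreservesColimit K G] (hK : ∀ j, IsIso (μ.app (K.obj j))) :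
    IsIso (μ.app c.pt) :=
  have : ∀ j, IsIso ((Functor.whiskerLeft K μ).app j) := hK
  have : IsIso (Functor.whiskerLeft K μ) := NatIso.isIso_of_isIso_app _
  isIso_app_coconePt_of_preservesColimit K μ c hc

end CategoryTheory.NatTrans

namespace ModuleCat

variable {R : Type u} [Ring R] {D : Type*} [Category* D]

lemma isIso_app_finsupp {F G : ModuleCat.{u} R ⥤ D} (μ : F ⟶ G) (σ : Type u)
    [PreservesColimitsOfShape (Discrete σ) F] [PreservesColimitsOfShape (Discrete σ) G]
    (h : IsIso (μ.app (of R R))) : IsIso (μ.app (of R (σ →₀ R))) := by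
  classical
  have hsum : IsIso (μ.app (of R (DirectSum σ fun _ ↦ R))) :=
    μ.isIso_app_of_isColimit (coproductCoconeIsColimit fun _ : σ ↦ of R R) fun _ ↦ h
  exact (NatTrans.isIso_app_iff_of_iso μ (finsuppLEquivDirectSum R R σ).toModuleIso).mpr hsum

lemma isIso_app_of_exact {F G : ModuleCat.{v} R ⥤ D} (μ : F ⟶ G) {P Q M : ModuleCat.{v} R}
    (f : P ⟶ Q) (g : Q ⟶ M) (hfg : Function.Exact f.hom g.hom) (hg : Function.Surjective g.hom)
    [PreservesColimit (parallelPair f 0) F] [PreservesColimit (parallelPair f 0) G]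
    (hP : IsIso (μ.app P)) (hQ : IsIso (μ.app Q)) : IsIso (μ.app M) :=
  μ.isIso_app_of_isColimit (isColimitCokernelCofork f g hfg hg) (by rintro (_ | _) <;> assumption)

lemma isIso_app_of_presentation {F G : ModuleCat.{u} R ⥤ D} (μ : F ⟶ G)
    [PreservesColimitsOfSize.{u, u} F] [PreservesColimitsOfSize.{u, u} G]
    (h : IsIso (μ.app (of R R))) {M : Type u} [AddCommGroup M] [Module R M]
    (pres : Module.Presentation.{u, u} R M) : IsIso (μ.app (of R M)) :=
  have := PreservesColimitsOfSize.preservesFiniteColimits F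
  have := PreservesColimitsOfSize.preservesFiniteColimits G
  isIso_app_of_exact μ (ofHom pres.map) (ofHom pres.π) pres.exact pres.surjective_π
    (isIso_app_finsupp μ _ h) (isIso_app_finsupp μ _ h)

end ModuleCat

theorem natTrans_isIso_of_isIso_app_self_general
    {R : Type u} [Ring R] {D : Type v} [Category.{w} D]
    (F G : ModuleCat.{u} R ⥤ D)
    [PreservesColimitsOfSize.{u, u} F] [PreservesColimitsOfSize.{u, u} G]
    (μ : F ⟶ G) (h : IsIso (μ.app (ModuleCat.of R R))) :
    ∀ M : ModuleCat.{u} R, IsIso (μ.app M) :=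
  fun M ↦ ModuleCat.isIso_app_of_presentation μ h (Module.Presentation.tautological R M)

theorem natTrans_isIso_of_isIso_app_self
    {R : Type u} [Ring R] {D : Type v} [Category.{w} D]
    [HasColimitsOfSize.{u, u} D]
    (F G : ModuleCat.{u} R ⥤ D)
    [PreservesColimitsOfSize.{u, u} F] [PreservesColimitsOfSize.{u, u} G]
    (μ : F ⟶ G) (h : IsIso (μ.app (ModuleCat.of R R))) :
    ∀ M : ModuleCat.{u} R, IsIso (μ.app M) :=
  natTrans_isIso_of_isIso_app_self_general F G μ h
end
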